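/- arXiv:2111.05219 — 6 statements merged into one kernel-verified Lean document; each statement's English description precedes it below -/
import Mathlib

section
/- If p is a prime with p ≡ 3 (mod 4), then for every nonzero d ∈ Z_p, the number of a ∈ Z_p such that a, a+d, a+2d are all nonzero quadratic residues modulo p is exactly ⌊(p-3)/8⌋. -/
/-!
Weight each `a` by `(1 + χ a) (1 + χ (a + d)) (1 + χ (a + 2d))`, where `χ` is the quadratic
character. The weight is `8` at the progressions being counted and `0` at every other `a` with
`a, a + d, a + 2d ≠ 0`, while the three points `a = 0, -d, -2d` contribute `2 + 2 χ(2)` because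
`χ(-1) = -1`. Expanding the product instead, the linear sums vanish, the three quadratic sums are
Jacobi sums equal to `-1`, and the cubic sum vanishes because `a ↦ -2d - a` changes its sign.
Hence `8 N + 2 + 2 χ(2) = p - 3`, and `χ(2) = ±1` gives `N = ⌊(p - 3) / 8⌋`.
-/

open Finset

namespace FiniteField

variable {F : Type*} [Field F] [Fintype F] [DecidableEq F]

lemma quadraticChar_sum_add (hF : ringChar F ≠ 2) (c : F) :
    ∑ a : F, quadraticChar F (a + c) = 0 :=
  (Equiv.sum_comp (Equiv.addRight c) (quadraticChar F ·)).trans (quadraticChar_sum_zero hF)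

-- After `a = -c x` the sum becomes `χ(-1) J(χ, χ)`, and `J(χ, χ⁻¹) = -χ(-1)`.
lemma quadraticChar_sum_mul_add (hF : ringChar F ≠ 2) {c : F} (hc : c ≠ 0) :
    ∑ a : F, quadraticChar F (a * (a + c)) = -1 := by
  set χ := quadraticChar F
  have hJ : ∑ x : F, χ x * χ (1 - x) = -χ (-1) := by
    simpa only [jacobiSum, (quadraticChar_isQuadratic F).inv] using
      jacobiSum_nontrivial_inv (quadraticChar_ne_one hF)
  have hterm (x : F) : χ (-c * x * (-c * x + c)) = χ (-1) * (χ x * χ (1 - x)) := by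
    rw [show -c * x * (-c * x + c) = c ^ 2 * (-1 * (x * (1 - x))) by ring, map_mul,
      quadraticChar_sq_one' hc, one_mul, map_mul, map_mul]
  rw [← Equiv.sum_comp (Equiv.mulLeft₀ (-c) (neg_ne_zero.mpr hc))]
  simp only [Equiv.mulLeft₀_apply, hterm, ← mul_sum, hJ]
  linear_combination -quadraticChar_sq_one (F := F) (neg_ne_zero.mpr one_ne_zero)

lemma quadraticChar_sum_add_mul_add (hF : ringChar F ≠ 2) {b c : F} (hbc : b ≠ c) :
    ∑ a : F, quadraticChar F ((a + b) * (a + c)) = -1 := by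
  rw [← quadraticChar_sum_mul_add hF (sub_ne_zero.mpr hbc.symm),
    ← Equiv.sum_comp (Equiv.addRight b) (fun x => quadraticChar F (x * (x + (c - b))))]
  simp only [Equiv.coe_addRight, add_add_sub_cancel]

lemma sum_prod_one_add_quadraticChar (hF : ringChar F ≠ 2) {b c e : F}
    (hbc : b ≠ c) (hbe : b ≠ e) (hce : c ≠ e) :
    ∑ a : F, (1 + quadraticChar F (a + b)) * (1 + quadraticChar F (a + c)) *
        (1 + quadraticChar F (a + e)) =
      Fintype.card F - 3 + ∑ a : F, quadraticChar F ((a + b) * (a + c) * (a + e)) := by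
  have hexpand (x y z : F) :
      (1 + quadraticChar F x) * (1 + quadraticChar F y) * (1 + quadraticChar F z) =
        1 + quadraticChar F x + quadraticChar F y + quadraticChar F z +
          quadraticChar F (x * y) + quadraticChar F (x * z) + quadraticChar F (y * z) +
          quadraticChar F (x * y * z) := by
    simp only [map_mul]
    ring
  simp only [hexpand, sum_add_distrib, quadraticChar_sum_add hF,
    quadraticChar_sum_add_mul_add hF hbc, quadraticChar_sum_add_mul_add hF hbe,
    quadraticChar_sum_add_mul_add hF hce, sum_const, card_univ, nsmul_eq_mul, mul_one]
  ring

lemma quadraticChar_sum_threeAP_prod_eq_zero (hneg : quadraticChar F (-1) = -1) (d : F) :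
    ∑ a : F, quadraticChar F (a * (a + d) * (a + 2 * d)) = 0 := by
  set χ := quadraticChar F
  have hreflect (a : F) : χ ((-2 * d - a) * (-2 * d - a + d) * (-2 * d - a + 2 * d)) =
      -χ (a * (a + d) * (a + 2 * d)) := by
    rw [show (-2 * d - a) * (-2 * d - a + d) * (-2 * d - a + 2 * d) =
      -1 * (a * (a + d) * (a + 2 * d)) by ring, map_mul, hneg, neg_one_mul]
  have h := Equiv.sum_comp (Equiv.subLeft (-2 * d)) (fun a => χ (a * (a + d) * (a + 2 * d)))
  simp only [Equiv.subLeft_apply, hreflect, sum_neg_distrib] at h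
  linarith

lemma sum_prod_one_add_quadraticChar_threeAP (hF : ringChar F ≠ 2)
    (hneg : quadraticChar F (-1) = -1) {d : F} (hd : d ≠ 0) :
    ∑ a : F, (1 + quadraticChar F a) * (1 + quadraticChar F (a + d)) *
        (1 + quadraticChar F (a + 2 * d)) = Fintype.card F - 3 := by
  have h2d : 2 * d ≠ 0 := mul_ne_zero (Ring.two_ne_zero hF) hd
  have h := sum_prod_one_add_quadraticChar (b := 0) hF hd.symm h2d.symm
    fun h => hd (by linear_combination -h)
  simpa only [add_zero, quadraticChar_sum_threeAP_prod_eq_zero hneg] using h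

lemma one_add_quadraticChar_of_ne_zero {x : F} (hx : x ≠ 0) :
    1 + quadraticChar F x = if IsSquare x then 2 else 0 := by
  split_ifs with h
  · rw [(quadraticChar_one_iff_isSquare hx).mpr h]; rfl
  · rw [quadraticChar_neg_one_iff_not_isSquare.mpr h]; rfl

lemma prod_one_add_quadraticChar_of_ne_zero {x y z : F} (hx : x ≠ 0) (hy : y ≠ 0) (hz : z ≠ 0) :
    (1 + quadraticChar F x) * (1 + quadraticChar F y) * (1 + quadraticChar F z) =
      if IsSquare x ∧ IsSquare y ∧ IsSquare z then 8 else 0 := by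
  rw [one_add_quadraticChar_of_ne_zero hx, one_add_quadraticChar_of_ne_zero hy,
    one_add_quadraticChar_of_ne_zero hz]
  split_ifs <;> simp_all

lemma sum_prod_one_add_quadraticChar_threeAP_eq_card (hF : ringChar F ≠ 2)
    (hneg : quadraticChar F (-1) = -1) {d : F} (hd : d ≠ 0) :
    ∑ a : F, (1 + quadraticChar F a) * (1 + quadraticChar F (a + d)) *
        (1 + quadraticChar F (a + 2 * d)) =
      8 * #{a | a ≠ 0 ∧ a + d ≠ 0 ∧ a + 2 * d ≠ 0 ∧
        IsSquare a ∧ IsSquare (a + d) ∧ IsSquare (a + 2 * d)} + 2 + 2 * quadraticChar F 2 := by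
  have h2d : 2 * d ≠ 0 := mul_ne_zero (Ring.two_ne_zero hF) hd
  set S : Finset F := {0, -d, -(2 * d)}
  rw [← sum_add_sum_compl S, add_comm, add_assoc]
  congr 1
  · have hfilter : ({a | a ≠ 0 ∧ a + d ≠ 0 ∧ a + 2 * d ≠ 0 ∧
        IsSquare a ∧ IsSquare (a + d) ∧ IsSquare (a + 2 * d)} : Finset F) =
        {a ∈ Sᶜ | IsSquare a ∧ IsSquare (a + d) ∧ IsSquare (a + 2 * d)} := by
      ext a
      simp [S, eq_neg_iff_add_eq_zero, and_assoc]
    rw [hfilter, card_filter]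
    push_cast
    rw [mul_sum]
    refine sum_congr rfl fun a ha => ?_
    simp only [S, mem_compl, mem_insert, mem_singleton, not_or, eq_neg_iff_add_eq_zero] at ha
    rw [prod_one_add_quadraticChar_of_ne_zero ha.1 ha.2.1 ha.2.2]
    split_ifs <;> rfl
  · have hχneg (x : F) : quadraticChar F (-x) = -quadraticChar F x := by
      rw [neg_eq_neg_one_mul, map_mul, hneg, neg_one_mul]
    rw [sum_insert (by simp [hd, h2d]),
      sum_insert (mem_singleton.not.mpr fun h => hd (by linear_combination h)), sum_singleton,
      show -d + 2 * d = d by ring, show -(2 * d) + d = -d by ring]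
    simp only [zero_add, neg_add_cancel, quadraticChar_zero, hχneg, map_mul]
    linear_combination (2 * quadraticChar F 2 - 1) * quadraticChar_sq_one hd

theorem card_isSquare_threeAP_of_card_mod_four_eq_three (hF : Fintype.card F % 4 = 3) {d : F}
    (hd : d ≠ 0) :
    #{a | a ≠ 0 ∧ a + d ≠ 0 ∧ a + 2 * d ≠ 0 ∧
      IsSquare a ∧ IsSquare (a + d) ∧ IsSquare (a + 2 * d)} = (Fintype.card F - 3) / 8 := by
  have hchar : ringChar F ≠ 2 := fun h => by
    have := even_card_iff_char_two.mp h
    omega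
  have hneg : quadraticChar F (-1) = -1 :=
    quadraticChar_neg_one_iff_not_isSquare.mpr (by rw [isSquare_neg_one_iff]; omega)
  have hcount := (sum_prod_one_add_quadraticChar_threeAP_eq_card hchar hneg hd).symm.trans
    (sum_prod_one_add_quadraticChar_threeAP hchar hneg hd)
  rcases quadraticChar_dichotomy (Ring.two_ne_zero hchar) with h2 | h2 <;>
    rw [h2] at hcount <;> omega

end FiniteField

theorem three_ap_residues_count (p : ℕ) [Fact p.Prime] (hp : p % 4 = 3)
    (d : ZMod p) (hd : d ≠ 0) :
    (Finset.univ.filter (fun a : ZMod p =>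
      a ≠ 0 ∧ a + d ≠ 0 ∧ a + 2 * d ≠ 0 ∧
      IsSquare a ∧ IsSquare (a + d) ∧ IsSquare (a + 2 * d))).card = (p - 3) / 8 := by
  simpa only [ZMod.card] using
    FiniteField.card_isSquare_threeAP_of_card_mod_four_eq_three (by rwa [ZMod.card]) hd
end

section
/- If p is a prime with p ≡ 3 (mod 4), then for every nonzero d ∈ Z_p, the number of a ∈ Z_p such that a, a+d, a+2d are all nonzero quadratic nonresidues modulo p is exactly ⌊(p-3)/8⌋. -/
/-! Let `q` be the size of the field and `N` the count. For `x ≠ 0`, `1 - χ x` is `2` on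
nonresidues and `0` on squares, so the weight `(1 - χ a) (1 - χ (a + d)) (1 - χ (a + 2d))` is `8`
on the progressions being counted and `0` on every other progression avoiding `0`. Expanding the
product, its sum over the field is `q - 3`: the linear sums vanish, each correlation
`∑ χ (a + b) χ (a + c)` is a Jacobi sum equal to `-1`, and the cubic sum vanishes because `χ` is
odd when `q ≡ 3 [MOD 4]`, so that the reflection `a ↦ -2d - a` reverses its sign. The three
progressions through `0` contribute `2 + 2 χ 2`, hence `8 N = q - 5 - 2 χ 2`, which is
`⌊(q - 3) / 8⌋` for either sign of `χ 2`. -/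

open Finset

theorem MulChar.sum_mul_inv_apply_add {F R : Type*} [Field F] [Fintype F] [CommRing R]
    [IsDomain R] {χ : MulChar F R} (hχ : χ ≠ 1) {c : F} (hc : c ≠ 0) :
    ∑ a, χ a * χ⁻¹ (a + c) = -1 := by
  have hunit : χ c * χ⁻¹ c = 1 := by
    rw [← MulChar.mul_apply, mul_inv_cancel, MulChar.one_apply (isUnit_iff_ne_zero.mpr hc)]
  have hsq : χ (-1) * χ (-1) = 1 := by
    rw [← map_mul, neg_one_mul, neg_neg, map_one]
  calc ∑ a, χ a * χ⁻¹ (a + c)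
      = ∑ x, χ (-c * x) * χ⁻¹ (-c * x + c) :=
        (Equiv.sum_comp (Equiv.mulLeft₀ (-c) (neg_ne_zero.mpr hc)) _).symm
    _ = ∑ x, χ (-1) * (χ x * χ⁻¹ (1 - x)) := by
        refine sum_congr rfl fun x _ => ?_
        rw [show -c * x = -1 * c * x by ring, show -1 * c * x + c = c * (1 - x) by ring,
          map_mul, map_mul, map_mul]
        linear_combination (χ (-1) * χ x * χ⁻¹ (1 - x)) * hunit
    _ = -1 := by
        rw [← mul_sum, ← jacobiSum, jacobiSum_nontrivial_inv hχ]
        linear_combination -hsq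

theorem sum_mul_mul_add_two_mul_eq_zero_of_odd {R : Type*} [Ring R] [Fintype R] {f : R → ℤ}
    (hf : ∀ x, f (-x) = -f x) (d : R) :
    ∑ a, f a * f (a + d) * f (a + 2 * d) = 0 := by
  have hreflect : ∀ a, f (-2 * d - a) * f (-2 * d - a + d) * f (-2 * d - a + 2 * d) =
      -(f a * f (a + d) * f (a + 2 * d)) := fun a => by
    rw [show -2 * d - a = -(a + 2 * d) by noncomm_ring, show -(a + 2 * d) + d = -(a + d) by
      noncomm_ring, show -(a + 2 * d) + 2 * d = -a by noncomm_ring, hf, hf, hf]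
    ring
  have h := Equiv.sum_comp (Equiv.subLeft (-2 * d)) fun a => f a * f (a + d) * f (a + 2 * d)
  simp only [Equiv.subLeft_apply, hreflect, sum_neg_distrib] at h
  linarith

section QuadraticChar

variable {F : Type*} [Field F] [Fintype F]

theorem ringChar_ne_two_of_card_mod_four_eq_three (hF : Fintype.card F % 4 = 3) :
    ringChar F ≠ 2 := by
  rw [Ne, FiniteField.even_card_iff_char_two]
  omega

variable [DecidableEq F]

local notation "χ" => quadraticChar F

theorem quadraticChar_neg_of_card_mod_four_eq_three (hF : Fintype.card F % 4 = 3) (x : F) :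
    χ (-x) = -χ x := by
  have hneg : χ (-1) = -1 :=
    quadraticChar_neg_one_iff_not_isSquare.mpr (by rw [FiniteField.isSquare_neg_one_iff]; omega)
  rw [neg_eq_neg_one_mul x, map_mul, hneg, neg_one_mul]

theorem quadraticChar_sum_add (hF : ringChar F ≠ 2) (c : F) : ∑ a, χ (a + c) = 0 :=
  (Equiv.sum_comp (Equiv.addRight c) χ).trans (quadraticChar_sum_zero hF)

theorem quadraticChar_sum_mul_add (hF : ringChar F ≠ 2) {c : F} (hc : c ≠ 0) :
    ∑ a, χ a * χ (a + c) = -1 := by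
  simpa only [(quadraticChar_isQuadratic F).inv] using
    MulChar.sum_mul_inv_apply_add (quadraticChar_ne_one hF) hc

theorem quadraticChar_sum_add_mul_add (hF : ringChar F ≠ 2) {b c : F} (hbc : b ≠ c) :
    ∑ a, χ (a + b) * χ (a + c) = -1 := by
  calc ∑ a, χ (a + b) * χ (a + c)
      = ∑ a, χ (a + b) * χ (a + b + (c - b)) := by simp only [add_add_sub_cancel]
    _ = ∑ a, χ a * χ (a + (c - b)) :=
        Equiv.sum_comp (Equiv.addRight b) fun a => χ a * χ (a + (c - b))
    _ = -1 := quadraticChar_sum_mul_add hF (sub_ne_zero.mpr hbc.symm)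

theorem not_isSquare_of_one_sub_quadraticChar_ne_zero {x : F} (hx : x ≠ 0)
    (h : 1 - χ x ≠ 0) : ¬IsSquare x := fun hsq =>
  h (by rw [(quadraticChar_one_iff_isSquare hx).mpr hsq, sub_self])

end QuadraticChar

section NonresidueAP

variable {F : Type*} [Field F] [Fintype F] [DecidableEq F]

local notation "χ" => quadraticChar F

def IsNonresidueAP (d a : F) : Prop :=
  a ≠ 0 ∧ a + d ≠ 0 ∧ a + 2 * d ≠ 0 ∧ ¬IsSquare a ∧ ¬IsSquare (a + d) ∧ ¬IsSquare (a + 2 * d)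

def nonresidueAPWeight (d a : F) : ℤ :=
  (1 - χ a) * (1 - χ (a + d)) * (1 - χ (a + 2 * d))

theorem nonresidueAPWeight_of_isNonresidueAP {d a : F} (h : IsNonresidueAP d a) :
    nonresidueAPWeight d a = 8 := by
  obtain ⟨-, -, -, h₀, h₁, h₂⟩ := h
  simp only [nonresidueAPWeight, quadraticChar_neg_one_iff_not_isSquare.mpr, h₀, h₁, h₂,
    not_false_eq_true]
  norm_num

theorem isNonresidueAP_of_nonresidueAPWeight_ne_zero {d a : F} (h₀ : a ≠ 0) (h₁ : a + d ≠ 0)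
    (h₂ : a + 2 * d ≠ 0) (hw : nonresidueAPWeight d a ≠ 0) : IsNonresidueAP d a := by
  simp only [nonresidueAPWeight, mul_ne_zero_iff] at hw
  exact ⟨h₀, h₁, h₂, not_isSquare_of_one_sub_quadraticChar_ne_zero h₀ hw.1.1,
    not_isSquare_of_one_sub_quadraticChar_ne_zero h₁ hw.1.2,
    not_isSquare_of_one_sub_quadraticChar_ne_zero h₂ hw.2⟩

theorem sum_nonresidueAPWeight (hF : Fintype.card F % 4 = 3) {d : F} (hd : d ≠ 0) :
    ∑ a, nonresidueAPWeight d a = Fintype.card F - 3 := by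
  have hF2 := ringChar_ne_two_of_card_mod_four_eq_three hF
  have hlin := quadraticChar_sum_zero hF2
  have hlin₁ := quadraticChar_sum_add hF2 d
  have hlin₂ := quadraticChar_sum_add hF2 (2 * d)
  have hcorr₀₁ := quadraticChar_sum_mul_add hF2 hd
  have hcorr₀₂ := quadraticChar_sum_mul_add hF2 (mul_ne_zero (Ring.two_ne_zero hF2) hd)
  have hcorr₁₂ := quadraticChar_sum_add_mul_add hF2 (b := d) (c := 2 * d)
    fun h => hd (by linear_combination -h)
  have hcubic := sum_mul_mul_add_two_mul_eq_zero_of_odd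
    (quadraticChar_neg_of_card_mod_four_eq_three hF) d
  calc ∑ a, nonresidueAPWeight d a
      = ∑ a, (1 - χ a - χ (a + d) - χ (a + 2 * d) + χ a * χ (a + d) + χ a * χ (a + 2 * d)
          + χ (a + d) * χ (a + 2 * d) - χ a * χ (a + d) * χ (a + 2 * d)) :=
        sum_congr rfl fun a _ => by unfold nonresidueAPWeight; ring
    _ = Fintype.card F - 3 := by
        simp only [sum_add_distrib, sum_sub_distrib, hlin, hlin₁, hlin₂, hcorr₀₁, hcorr₀₂,
          hcorr₁₂, hcubic, sum_const, card_univ, nsmul_eq_mul, mul_one]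
        ring

theorem sum_nonresidueAPWeight_through_zero (hF : Fintype.card F % 4 = 3) {d : F} (hd : d ≠ 0) :
    ∑ a ∈ {0, -d, -(2 * d)}, nonresidueAPWeight d a = 2 + 2 * χ 2 := by
  have hsq : χ d * χ d = 1 := by rw [← sq]; exact quadraticChar_sq_one hd
  have h2d : 2 * d ≠ 0 :=
    mul_ne_zero (Ring.two_ne_zero (ringChar_ne_two_of_card_mod_four_eq_three hF)) hd
  rw [sum_insert (by simp [hd, h2d]),
    sum_pair (by simpa using fun h => hd (by linear_combination -h))]
  simp only [nonresidueAPWeight, zero_add, neg_add_cancel, show -d + 2 * d = d by ring,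
    show -(2 * d) + d = -d by ring, show -(2 * d) + 2 * d = 0 by ring,
    quadraticChar_neg_of_card_mod_four_eq_three hF, map_mul, quadraticChar_zero]
  linear_combination (2 * χ 2 - 1) * hsq

theorem eight_mul_card_filter_isNonresidueAP (hF : Fintype.card F % 4 = 3) {d : F} (hd : d ≠ 0)
    [DecidablePred (IsNonresidueAP d)] :
    8 * (#{a | IsNonresidueAP d a} : ℤ) + 2 + 2 * χ 2 = Fintype.card F - 3 := by
  set S := univ.filter (IsNonresidueAP d)
  set Z : Finset F := {0, -d, -(2 * d)}
  have hZ : ∀ a ∉ Z, a ≠ 0 ∧ a + d ≠ 0 ∧ a + 2 * d ≠ 0 := fun a ha => by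
    simp only [Z, mem_insert, mem_singleton, not_or] at ha
    exact ⟨ha.1, fun h => ha.2.1 (by linear_combination h),
      fun h => ha.2.2 (by linear_combination h)⟩
  have hdisj : Disjoint S Z := disjoint_left.mpr fun a ha haZ => by
    obtain ⟨h₀, h₁, h₂, -⟩ := (mem_filter.mp ha).2
    simp only [Z, mem_insert, mem_singleton] at haZ
    rcases haZ with rfl | rfl | rfl
    · exact h₀ rfl
    · exact h₁ (neg_add_cancel d)
    · exact h₂ (neg_add_cancel _)
  have hsupp : ∑ a ∈ S ∪ Z, nonresidueAPWeight d a = ∑ a, nonresidueAPWeight d a := by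
    refine sum_subset (subset_univ _) fun a _ ha => ?_
    rw [mem_union, not_or] at ha
    obtain ⟨h₀, h₁, h₂⟩ := hZ a ha.2
    by_contra hw
    exact ha.1 (mem_filter.mpr
      ⟨mem_univ a, isNonresidueAP_of_nonresidueAPWeight_ne_zero h₀ h₁ h₂ hw⟩)
  rw [← sum_nonresidueAPWeight hF hd, ← hsupp, sum_union hdisj,
    sum_nonresidueAPWeight_through_zero hF hd,
    sum_congr rfl fun a ha => nonresidueAPWeight_of_isNonresidueAP (mem_filter.mp ha).2,
    sum_const, nsmul_eq_mul]
  ring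

theorem card_filter_isNonresidueAP (hF : Fintype.card F % 4 = 3) {d : F} (hd : d ≠ 0)
    [DecidablePred (IsNonresidueAP d)] :
    #{a | IsNonresidueAP d a} = (Fintype.card F - 3) / 8 := by
  have h := eight_mul_card_filter_isNonresidueAP hF hd
  rcases quadraticChar_dichotomy (Ring.two_ne_zero (ringChar_ne_two_of_card_mod_four_eq_three hF))
    with h2 | h2 <;> rw [h2] at h <;> omega

end NonresidueAP

theorem three_ap_nonresidues_count (p : ℕ) [Fact p.Prime] (hp : p % 4 = 3)
    (d : ZMod p) (hd : d ≠ 0) :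
    (Finset.univ.filter (fun a : ZMod p =>
      a ≠ 0 ∧ a + d ≠ 0 ∧ a + 2 * d ≠ 0 ∧
      ¬ IsSquare a ∧ ¬ IsSquare (a + d) ∧ ¬ IsSquare (a + 2 * d))).card = (p - 3) / 8 := by
  classical
  rw [← ZMod.card p] at hp
  convert card_filter_isNonresidueAP hp hd
  · exact Iff.rfl
  · exact (ZMod.card p).symm
end

section
/- If p is a prime with p ≡ 3 (mod 4), then the number of a ∈ Z_p such that a, a+1, a+2 are all nonzero, with a and a+2 quadratic residues and a+1 a quadratic nonresidue modulo p, is exactly ⌈(p-3)/8⌉. -/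
/-!
Write `χ` for the quadratic character of a finite field `F` with `|F| ≡ 3 (mod 4)`, so that
`χ (-1) = -1`. The weight `(1 + χ a) (1 - χ (a + 1)) (1 + χ (a + 2))` is `8` at the pattern
`(residue, nonresidue, residue)` and `0` at every other `a` with `a, a + 1, a + 2 ≠ 0`; among the
three remaining `a`, only `a = -2` has nonzero weight, namely `2 (1 - χ 2)`.
Summing the expanded weight over `F`, the linear terms vanish, each `∑ χ a χ (a + b)` is `-1`
(a Jacobi sum), and the cubic term vanishes because `a ↦ -2 - a` changes its sign.
Hence `8 N = |F| - 1 + 2 χ 2`, and `χ 2` is determined by `|F| mod 8`.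
-/

open Finset

theorem MulChar.sum_mul_add_one_mul_add_two_eq_zero {R R' : Type*} [CommRing R] [Fintype R]
    [CommRing R'] [NoZeroDivisors R'] [CharZero R'] (χ : MulChar R R') (h : χ (-1) = -1) :
    ∑ a : R, χ a * χ (a + 1) * χ (a + 2) = 0 := by
  refine CharZero.eq_neg_self_iff.mp ?_
  refine (Fintype.sum_equiv (Equiv.subLeft (-2)) _ (fun a => -(χ a * χ (a + 1) * χ (a + 2)))
    fun a => ?_).trans (sum_neg_distrib _)
  rw [Equiv.subLeft_apply, show -2 - a = -1 * (a + 2) by ring,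
    show -1 * (a + 2) + 1 = -1 * (a + 1) by ring, show -1 * (a + 2) + 2 = -1 * a by ring]
  simp only [map_mul, h]
  ring

section QuadraticChar

variable {F : Type*} [Field F] [Fintype F] [DecidableEq F]

local notation "χ" => quadraticChar F

theorem quadraticChar_sum_mul_add_eq_neg_one (hF : ringChar F ≠ 2) {b : F} (hb : b ≠ 0) :
    ∑ a : F, χ a * χ (a + b) = -1 := by
  have jacobi : ∑ x : F, χ x * χ (1 - x) = -χ (-1) := by
    have := jacobiSum_nontrivial_inv (quadraticChar_ne_one hF)
    rwa [(quadraticChar_isQuadratic F).inv, jacobiSum] at this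
  calc ∑ a : F, χ a * χ (a + b)
      = ∑ x : F, χ (-b * x) * χ (-b * x + b) :=
        (Equiv.sum_comp (Equiv.mulLeft₀ (-b) (neg_ne_zero.mpr hb)) fun a => χ a * χ (a + b)).symm
    _ = ∑ x : F, χ (-1) * χ b ^ 2 * (χ x * χ (1 - x)) := by
        refine sum_congr rfl fun x _ => ?_
        rw [show -b * x + b = b * (1 - x) by ring, show -b * x = -1 * b * x by ring]
        simp only [map_mul]
        ring
    _ = -1 := by
        rw [← mul_sum, jacobi, quadraticChar_sq_one hb, mul_one, mul_neg, ← sq,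
          quadraticChar_sq_one (neg_ne_zero.mpr one_ne_zero)]

def rnrWeight (a : F) : ℤ :=
  (1 + χ a) * (1 - χ (a + 1)) * (1 + χ (a + 2))

theorem rnrWeight_eq (hF : ringChar F ≠ 2) (hneg : χ (-1) = -1) (a : F) :
    rnrWeight a =
      8 * (if a ≠ 0 ∧ a + 1 ≠ 0 ∧ a + 2 ≠ 0 ∧
          IsSquare a ∧ ¬ IsSquare (a + 1) ∧ IsSquare (a + 2) then 1 else 0) +
        if a = -2 then 2 * (1 - χ 2) else 0 := by
  by_cases h0 : a = 0
  · subst h0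
    simp [rnrWeight, Ring.two_ne_zero hF]
  by_cases h1 : a + 1 = 0
  · obtain rfl : a = -1 := eq_neg_of_add_eq_zero_left h1
    have : (-1 : F) ≠ -2 := fun h => one_ne_zero (by linear_combination h)
    simp [rnrWeight, hneg, this]
  by_cases h2 : a + 2 = 0
  · obtain rfl : a = -2 := eq_neg_of_add_eq_zero_left h2
    have neg_two : χ (-2) = -χ 2 := by
      rw [show (-2 : F) = -1 * 2 by ring, map_mul, hneg, neg_one_mul]
    simp [rnrWeight, show (-2 : F) + 1 = -1 by ring, neg_two, hneg, mul_comm, sub_eq_add_neg]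
  have : a ≠ -2 := fun h => h2 (by rw [h]; ring)
  simp only [rnrWeight, quadraticChar_apply, quadraticCharFun, h0, h1, h2, this]
  split_ifs <;> simp_all

theorem sum_rnrWeight (hF : ringChar F ≠ 2) (hneg : χ (-1) = -1) :
    ∑ a : F, rnrWeight a = Fintype.card F + 1 := by
  have shift (c : F) (f : F → ℤ) : ∑ a : F, f (a + c) = ∑ a : F, f a :=
    Equiv.sum_comp (Equiv.addRight c) f
  have linear (c : F) : ∑ a : F, χ (a + c) = 0 := by
    rw [shift c χ, quadraticChar_sum_zero hF]
  have shifted_pair : ∑ a : F, χ (a + 1) * χ (a + 2) = -1 := by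
    simp_rw [← one_add_one_eq_two, ← add_assoc]
    rw [shift 1 fun a => χ a * χ (a + 1), quadraticChar_sum_mul_add_eq_neg_one hF one_ne_zero]
  have expand (a : F) : rnrWeight a = 1 + χ a - χ (a + 1) + χ (a + 2) - χ a * χ (a + 1)
      + χ a * χ (a + 2) - χ (a + 1) * χ (a + 2) - χ a * χ (a + 1) * χ (a + 2) := by
    simp only [rnrWeight]
    ring
  simp only [expand, sum_add_distrib, sum_sub_distrib, sum_const, card_univ, nsmul_one,
    quadraticChar_sum_zero hF, linear, shifted_pair,
    quadraticChar_sum_mul_add_eq_neg_one hF one_ne_zero,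
    quadraticChar_sum_mul_add_eq_neg_one hF (Ring.two_ne_zero hF),
    MulChar.sum_mul_add_one_mul_add_two_eq_zero χ hneg]
  ring

theorem eight_mul_card_rnr (hF : ringChar F ≠ 2) (hneg : χ (-1) = -1) :
    8 * (#{a : F | a ≠ 0 ∧ a + 1 ≠ 0 ∧ a + 2 ≠ 0 ∧
      IsSquare a ∧ ¬ IsSquare (a + 1) ∧ IsSquare (a + 2)} : ℤ) =
      Fintype.card F - 1 + 2 * χ 2 := by
  have := sum_rnrWeight hF hneg
  simp only [rnrWeight_eq hF hneg, sum_add_distrib, ← mul_sum, sum_boole, sum_ite_eq', mem_univ,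
    if_true] at this
  linear_combination this

end QuadraticChar

theorem pattern_rnr_count (p : ℕ) [Fact p.Prime] (hp : p % 4 = 3) :
    (Finset.univ.filter (fun a : ZMod p =>
      a ≠ 0 ∧ a + 1 ≠ 0 ∧ a + 2 ≠ 0 ∧
      IsSquare a ∧ ¬ IsSquare (a + 1) ∧ IsSquare (a + 2))).card = (p + 4) / 8 := by
  have hcard : Fintype.card (ZMod p) = p := ZMod.card p
  have hF : ringChar (ZMod p) ≠ 2 := by
    rw [ZMod.ringChar_zmod_n]
    omega
  have hneg : quadraticChar (ZMod p) (-1) = -1 := by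
    rw [quadraticChar_neg_one hF, hcard, ZMod.χ₄_nat_three_mod_four hp]
  have key := eight_mul_card_rnr hF hneg
  rw [quadraticChar_two hF, hcard, ZMod.χ₈_nat_eq_if_mod_eight] at key
  split_ifs at key <;> omega
end

section
/- If p is a prime with p ≡ 3 (mod 4), then the number of a ∈ Z_p such that a, a+1, a+2 are all nonzero, with a and a+1 quadratic residues and a+2 a quadratic nonresidue modulo p, is exactly ⌈(p-3)/8⌉. -/
/-!
Let `χ` be the quadratic character of a finite field `F` in which `-1` is not a square. When
`a, a + 1, a + 2` are nonzero, `(1 + χ a) (1 + χ (a + 1)) (1 - χ (a + 2))` is `8` on the pattern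
(residue, residue, nonresidue) and `0` otherwise; of the three remaining `a`, only `a = 0`
contributes, namely `2 - 2 χ 2`, since `χ (-1) = -1`. Summed over `F`, the linear terms vanish,
each quadratic term is a Jacobi sum equal to `-1`, and the cubic term vanishes because
`a ↦ -2 - a` changes its sign. So the number `N` of such `a` satisfies `8 N = #F - 1 + 2 χ 2`,
and `χ 2 = ±1` together with `#F ≡ 3 (mod 4)` gives `N = ⌊(#F + 4) / 8⌋`.
-/

open Finset

section FiniteField

variable {F : Type*} [Field F] [Fintype F]

theorem ringChar_ne_two_of_not_isSquare_neg_one (h : ¬IsSquare (-1 : F)) : ringChar F ≠ 2 :=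
  fun h2 => h (FiniteField.isSquare_of_char_two h2 _)

variable [DecidableEq F]

local notation "χ" => quadraticChar F

/-- The substitution `a = (c - d) x - c` turns this into the Jacobi sum `J(χ, χ) = -χ(-1)`. -/
theorem quadraticChar_sum_mul_add_add (hF : ringChar F ≠ 2) {c d : F} (hcd : c ≠ d) :
    ∑ a, χ ((a + c) * (a + d)) = -1 := by
  have hcd' : c - d ≠ 0 := sub_ne_zero.mpr hcd
  let e : F ≃ F := (Equiv.mulLeft₀ (c - d) hcd').trans (Equiv.subRight c)
  have hsubst : ∀ x, (e x + c) * (e x + d) = -1 * (c - d) ^ 2 * (x * (1 - x)) := fun x => by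
    simp only [e, Equiv.trans_apply, Equiv.mulLeft₀_apply, Equiv.subRight_apply]
    ring
  have hJ := jacobiSum_nontrivial_inv (quadraticChar_ne_one hF)
  rw [(quadraticChar_isQuadratic F).inv, jacobiSum] at hJ
  rw [← e.sum_comp]
  simp only [hsubst, map_mul, quadraticChar_sq_one' hcd', one_mul, mul_assoc, ← mul_sum, hJ]
  rw [mul_neg, ← map_mul, neg_one_mul, neg_neg, map_one]

theorem quadraticChar_sum_mul_add_mul_add_two_mul (hF : χ (-1) = -1) (b : F) :
    ∑ a, χ (a * (a + b) * (a + 2 * b)) = 0 := by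
  have hrefl : ∑ a, χ (a * (a + b) * (a + 2 * b)) = -∑ a, χ (a * (a + b) * (a + 2 * b)) := by
    conv_lhs => rw [← (Equiv.subLeft (-2 * b)).sum_comp]
    rw [← sum_neg_distrib]
    refine sum_congr rfl fun a _ => ?_
    rw [Equiv.subLeft_apply, show (-2 * b - a) * (-2 * b - a + b) * (-2 * b - a + 2 * b)
      = -1 * (a * (a + b) * (a + 2 * b)) by ring, map_mul, hF, neg_one_mul]
  omega

def rrnWeight (a : F) : ℤ := (1 + χ a) * (1 + χ (a + 1)) * (1 - χ (a + 2))

theorem sum_rrnWeight (hF : ¬IsSquare (-1 : F)) :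
    ∑ a : F, rrnWeight a = (Fintype.card F : ℤ) + 1 := by
  have hchar : ringChar F ≠ 2 := ringChar_ne_two_of_not_isSquare_neg_one hF
  have h01 : (0 : F) ≠ 1 := zero_ne_one
  have h02 : (0 : F) ≠ 2 := (Ring.two_ne_zero hchar).symm
  have h12 : (1 : F) ≠ 2 := fun h => h01 (by linear_combination h)
  have expand : ∀ a : F, rrnWeight a = 1 + χ (a + 0) + χ (a + 1) - χ (a + 2)
      + χ ((a + 0) * (a + 1)) - χ ((a + 0) * (a + 2)) - χ ((a + 1) * (a + 2))
      - χ (a * (a + 1) * (a + 2)) := fun a => by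
    simp only [rrnWeight, map_mul, add_zero]
    ring
  have hcubic : ∑ a : F, χ (a * (a + 1) * (a + 2)) = 0 := by
    simpa using quadraticChar_sum_mul_add_mul_add_two_mul
      (quadraticChar_neg_one_iff_not_isSquare.mpr hF) 1
  simp only [expand, sum_add_distrib, sum_sub_distrib, sum_const, card_univ, nsmul_eq_mul,
    mul_one, quadraticChar_sum_add hchar, quadraticChar_sum_mul_add_add hchar h01,
    quadraticChar_sum_mul_add_add hchar h02, quadraticChar_sum_mul_add_add hchar h12, hcubic]
  ring

theorem rrnWeight_eq (hF : ¬IsSquare (-1 : F)) (a : F) :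
    rrnWeight a = (if a ≠ 0 ∧ a + 1 ≠ 0 ∧ a + 2 ≠ 0 ∧
        IsSquare a ∧ IsSquare (a + 1) ∧ ¬IsSquare (a + 2) then 8 else 0)
      + if a = 0 then 2 - 2 * χ 2 else 0 := by
  have hχ : χ (-1) = -1 := quadraticChar_neg_one_iff_not_isSquare.mpr hF
  by_cases h0 : a = 0
  · subst h0
    simp only [rrnWeight, zero_add, quadraticChar_zero, map_one, ne_eq, not_true_eq_false,
      false_and, if_false, if_true]
    ring
  by_cases h1 : a + 1 = 0
  · obtain rfl : a = -1 := by linear_combination h1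
    simp [rrnWeight, hχ]
  by_cases h2 : a + 2 = 0
  · obtain rfl : a = -2 := by linear_combination h2
    simp [rrnWeight, hχ, h0, show (-2 : F) + 1 = -1 by ring]
  simp only [rrnWeight, quadraticChar_apply, quadraticCharFun, h0, h1, h2]
  split_ifs <;> simp_all

theorem card_filter_rrn_mul_eight (hF : ¬IsSquare (-1 : F)) :
    8 * (#{a : F | a ≠ 0 ∧ a + 1 ≠ 0 ∧ a + 2 ≠ 0 ∧
        IsSquare a ∧ IsSquare (a + 1) ∧ ¬IsSquare (a + 2)} : ℤ)
      = Fintype.card F - 1 + 2 * χ 2 := by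
  have h := sum_rrnWeight hF
  simp only [rrnWeight_eq hF, sum_add_distrib, ← sum_filter, sum_const, nsmul_eq_mul,
    filter_eq', mem_univ, if_true, card_singleton, Nat.cast_one, one_mul] at h
  linarith

end FiniteField

theorem pattern_rrn_count (p : ℕ) [Fact p.Prime] (hp : p % 4 = 3) :
    (Finset.univ.filter (fun a : ZMod p =>
      a ≠ 0 ∧ a + 1 ≠ 0 ∧ a + 2 ≠ 0 ∧
      IsSquare a ∧ IsSquare (a + 1) ∧ ¬ IsSquare (a + 2))).card = (p + 4) / 8 := by
  have hsq : ¬IsSquare (-1 : ZMod p) := by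
    rw [FiniteField.isSquare_neg_one_iff, ZMod.card]
    exact not_not.mpr hp
  have hcount := card_filter_rrn_mul_eight hsq
  rw [ZMod.card] at hcount
  rcases quadraticChar_dichotomy (Ring.two_ne_zero (ringChar_ne_two_of_not_isSquare_neg_one hsq))
    with h2 | h2 <;> rw [h2] at hcount <;> omega
end

section
/- If p is a prime with p ≡ 3 (mod 4), then for every pattern ε : {0,1,2} → {residue, nonresidue}, the number of a ∈ Z_p such that a, a+1, a+2 are all nonzero and a+i has quadratic character ε(i) for i = 0,1,2 is either ⌊(p-3)/8⌋ or ⌈(p-3)/8⌉. -/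
/-!
Let `χ` be the quadratic character of `F`, `q = #F`, and `e i = ±1` the sign the pattern prescribes
at `a + i`. When `a, a + 1, a + 2 ≠ 0`, the weight `∏ i, (1 + e i χ (a + i))` is `8` if `a` fits
the pattern and `0` otherwise. Summed over all of `F` it expands into character sums:
`∑ χ (a + c) = 0`, `∑ χ (a + c) χ (a + d) = -1` for `c ≠ d` (a Jacobi sum after an affine change
of variables), and `∑ χ a χ (a + 1) χ (a + 2) = 0` because `a ↦ -2 - a` flips its sign when
`χ (-1) = -1`, i.e. when `q ≡ 3 (mod 4)`. Subtracting the weights of `a = 0, -1, -2` gives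
`8 N = q - 3 + (1 + χ 2) c` with `c = ±2`, so `8 N ∈ {q - 7, q - 3, q + 1}`.
-/

open Finset

namespace MulChar

variable {F R : Type*} [Field F] [Fintype F] [CommRing R] [IsDomain R]

theorem sum_apply_add_eq_zero {χ : MulChar F R} (hχ : χ ≠ 1) (c : F) : ∑ a, χ (a + c) = 0 :=
  (Equiv.sum_comp (Equiv.addRight c) χ).trans (sum_eq_zero_of_ne_one hχ)

theorem sum_apply_add_mul_inv_apply_add {χ : MulChar F R} (hχ : χ ≠ 1) {c d : F} (hcd : c ≠ d) :
    ∑ a, χ (a + c) * χ⁻¹ (a + d) = -1 := by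
  obtain ⟨b, rfl⟩ : ∃ b, d = c + b := ⟨d - c, by ring⟩
  have hb : b ≠ 0 := fun h ↦ hcd (by rw [h, add_zero])
  have hχb : χ b * χ⁻¹ b = 1 := by rw [inv_apply', ← map_mul, mul_inv_cancel₀ hb, map_one]
  have key (x : F) :
      χ (-b * x - c + c) * χ⁻¹ (-b * x - c + (c + b)) = χ (-1) * (χ x * χ⁻¹ (1 - x)) := by
    rw [show -b * x - c + (c + b) = b * (1 - x) by ring, show -b * x - c + c = -1 * b * x by ring,
      map_mul, map_mul, map_mul]
    linear_combination χ (-1) * χ x * χ⁻¹ (1 - x) * hχb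
  calc ∑ a, χ (a + c) * χ⁻¹ (a + (c + b))
        = ∑ x, χ (-b * x - c + c) * χ⁻¹ (-b * x - c + (c + b)) :=
        (Equiv.sum_comp ((Equiv.mulLeft₀ (-b) (neg_ne_zero.2 hb)).trans (Equiv.subRight c))
          fun a ↦ χ (a + c) * χ⁻¹ (a + (c + b))).symm
    _ = χ (-1) * jacobiSum χ χ⁻¹ := by simp only [key, ← mul_sum, jacobiSum]
    _ = -1 := by
      rw [jacobiSum_nontrivial_inv hχ, mul_neg, ← map_mul, neg_one_mul, neg_neg, map_one]

theorem sum_mul_apply_add_one_mul_apply_add_two [CharZero R] {χ : MulChar F R}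
    (hχ : χ (-1) = -1) : ∑ a, χ a * χ (a + 1) * χ (a + 2) = 0 := by
  have reflect (a : F) : χ (-2 - a) * χ (-2 - a + 1) * χ (-2 - a + 2) =
      -(χ a * χ (a + 1) * χ (a + 2)) := by
    rw [show -2 - a = -1 * (a + 2) by ring, show -1 * (a + 2) + 1 = -1 * (a + 1) by ring,
      show -1 * (a + 2) + 2 = -1 * a by ring, map_mul, map_mul, map_mul, hχ]
    ring
  rw [← CharZero.neg_eq_self_iff, ← sum_neg_distrib]
  simp only [← reflect]
  exact Equiv.sum_comp (Equiv.subLeft (-2)) fun a ↦ χ a * χ (a + 1) * χ (a + 2)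

end MulChar

theorem ringChar_ne_two_of_quadraticChar_neg_one {F : Type*} [Field F] [Fintype F]
    [DecidableEq F] (h : quadraticChar F (-1) = -1) : ringChar F ≠ 2 := fun h2 ↦ by
  rw [quadraticChar_eq_one_of_char_two h2 (neg_ne_zero.2 one_ne_zero)] at h
  exact absurd h (by decide)

theorem forall_fin_three_add_ne_zero_iff {R : Type*} [Ring R] [DecidableEq R] {a : R} :
    (∀ i : Fin 3, a + (i : ℕ) ≠ 0) ↔ a ∉ ({0, -1, -2} : Finset R) := by
  norm_num [Fin.forall_fin_succ, add_eq_zero_iff_eq_neg]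

section Pattern

variable {F : Type*} [Field F] [Fintype F] [DecidableEq F]

def boolSign (t : Bool) : ℤ := if t then 1 else -1

theorem boolSign_eq_one_or_eq_neg_one (t : Bool) : boolSign t = 1 ∨ boolSign t = -1 := by
  cases t <;> simp [boolSign]

theorem one_add_boolSign_mul_quadraticChar {b : F} (hb : b ≠ 0) (t : Bool) :
    1 + boolSign t * quadraticChar F b = if (IsSquare b ↔ t = true) then 2 else 0 := by
  rcases quadraticChar_dichotomy hb with h | h
  · have hsq := (quadraticChar_one_iff_isSquare hb).1 h
    cases t <;> simp [boolSign, h, hsq]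
  · have hsq := quadraticChar_neg_one_iff_not_isSquare.1 h
    cases t <;> simp [boolSign, h, hsq]

def patternSet (ε : Fin 3 → Bool) : Finset F :=
  univ.filter fun a ↦ ∀ i : Fin 3, a + (i : ℕ) ≠ 0 ∧ (IsSquare (a + (i : ℕ)) ↔ ε i = true)

def patternWeight (ε : Fin 3 → Bool) (a : F) : ℤ :=
  ∏ i : Fin 3, (1 + boolSign (ε i) * quadraticChar F (a + (i : ℕ)))

theorem patternWeight_eq_ite {ε : Fin 3 → Bool} {a : F} (ha : ∀ i : Fin 3, a + (i : ℕ) ≠ 0) :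
    patternWeight ε a = if a ∈ patternSet ε then 8 else 0 := by
  rw [patternWeight, prod_congr rfl fun i _ ↦ one_add_boolSign_mul_quadraticChar (ha i) (ε i),
    prod_ite_zero]
  simp [patternSet, ha]

theorem patternWeight_eq (ε : Fin 3 → Bool) (a : F) :
    patternWeight ε a = (1 + boolSign (ε 0) * quadraticChar F a) *
      (1 + boolSign (ε 1) * quadraticChar F (a + 1)) *
      (1 + boolSign (ε 2) * quadraticChar F (a + 2)) := by
  simp [patternWeight, Fin.prod_univ_three]

theorem sum_patternWeight (hF : quadraticChar F (-1) = -1) (ε : Fin 3 → Bool) :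
    ∑ a : F, patternWeight ε a = Fintype.card F - (boolSign (ε 0) * boolSign (ε 1) +
      boolSign (ε 0) * boolSign (ε 2) + boolSign (ε 1) * boolSign (ε 2)) := by
  set χ := quadraticChar F
  have hχ : χ ≠ 1 := quadraticChar_ne_one (ringChar_ne_two_of_quadraticChar_neg_one hF)
  have shift (c : F) : ∑ a, χ (a + c) = 0 := MulChar.sum_apply_add_eq_zero hχ c
  have pair {c d : F} (hcd : c ≠ d) : ∑ a, χ (a + c) * χ (a + d) = -1 := by
    have hinv : χ⁻¹ = χ := (quadraticChar_isQuadratic F).inv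
    simpa only [hinv] using MulChar.sum_apply_add_mul_inv_apply_add hχ hcd
  have h2 : (2 : F) ≠ 0 := Ring.two_ne_zero (ringChar_ne_two_of_quadraticChar_neg_one hF)
  have h12 : (1 : F) ≠ 2 := fun h ↦ one_ne_zero (by linear_combination (-1 : F) * h)
  -- `a + 0` rather than `a`, so that `pair` applies to the terms containing it
  have expand (a : F) : patternWeight ε a = 1 + boolSign (ε 0) * χ (a + 0) +
      boolSign (ε 1) * χ (a + 1) + boolSign (ε 2) * χ (a + 2) +
      boolSign (ε 0) * boolSign (ε 1) * (χ (a + 0) * χ (a + 1)) +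
      boolSign (ε 0) * boolSign (ε 2) * (χ (a + 0) * χ (a + 2)) +
      boolSign (ε 1) * boolSign (ε 2) * (χ (a + 1) * χ (a + 2)) +
      boolSign (ε 0) * boolSign (ε 1) * boolSign (ε 2) * (χ a * χ (a + 1) * χ (a + 2)) := by
    rw [patternWeight_eq, add_zero]; ring
  simp only [expand, sum_add_distrib, ← mul_sum, shift, pair zero_ne_one, pair h2.symm,
    pair h12, MulChar.sum_mul_apply_add_one_mul_apply_add_two hF, sum_const, card_univ,
    nsmul_one]
  ring

theorem patternSet_subset (ε : Fin 3 → Bool) :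
    patternSet ε ⊆ univ \ ({0, -1, -2} : Finset F) := fun a ha ↦
  mem_sdiff.2 ⟨mem_univ a, forall_fin_three_add_ne_zero_iff.1 fun i ↦ ((mem_filter.1 ha).2 i).1⟩

theorem eight_mul_card_patternSet (hF : quadraticChar F (-1) = -1) (ε : Fin 3 → Bool) :
    8 * (#(patternSet ε : Finset F) : ℤ) = Fintype.card F - 3 + (1 + quadraticChar F 2) *
      (boolSign (ε 0) - boolSign (ε 2) - boolSign (ε 0) * boolSign (ε 1) -
        boolSign (ε 1) * boolSign (ε 2)) := by
  have h2 : (2 : F) ≠ 0 := Ring.two_ne_zero (ringChar_ne_two_of_quadraticChar_neg_one hF)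
  have interior : ∑ a ∈ (univ \ {0, -1, -2} : Finset F), patternWeight ε a =
      8 * (#(patternSet ε : Finset F) : ℤ) := by
    rw [sum_congr rfl fun a ha ↦
        patternWeight_eq_ite (forall_fin_three_add_ne_zero_iff.2 (mem_sdiff.1 ha).2),
      sum_ite_mem, inter_eq_right.2 (patternSet_subset ε), sum_const, nsmul_eq_mul, mul_comm]
  have boundary : ∑ a ∈ ({0, -1, -2} : Finset F), patternWeight ε a =
      (1 + boolSign (ε 1)) * (1 + boolSign (ε 2) * quadraticChar F 2) +
      (1 - boolSign (ε 0)) * (1 + boolSign (ε 2)) +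
      (1 - boolSign (ε 0) * quadraticChar F 2) * (1 - boolSign (ε 1)) := by
    have hχ2 : quadraticChar F (-2) = -quadraticChar F 2 := by
      rw [neg_eq_neg_one_mul, map_mul, hF, neg_one_mul]
    have h12 : (1 : F) ≠ 2 := fun h ↦ one_ne_zero (by linear_combination (-1 : F) * h)
    rw [sum_insert, sum_insert, sum_singleton]
    · simp only [patternWeight_eq, zero_add, neg_add_cancel, MulChar.map_zero, map_one, hF, hχ2,
        show (-1 : F) + 2 = 1 by ring, show (-2 : F) + 1 = -1 by ring]
      ring
    · simpa using h12
    · simpa [eq_comm (a := (0 : F))] using h2.symm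
  have total := sum_sdiff (subset_univ ({0, -1, -2} : Finset F)) (f := patternWeight ε)
  rw [interior, boundary, sum_patternWeight hF] at total
  linear_combination total

theorem card_patternSet_eq_or (hq : Fintype.card F % 4 = 3) (ε : Fin 3 → Bool) :
    #(patternSet ε : Finset F) = (Fintype.card F - 3) / 8 ∨
      #(patternSet ε : Finset F) = (Fintype.card F + 4) / 8 := by
  have hF : quadraticChar F (-1) = -1 :=
    quadraticChar_neg_one_iff_not_isSquare.2 fun h ↦ FiniteField.isSquare_neg_one_iff.1 h hq
  have h2 : (2 : F) ≠ 0 := Ring.two_ne_zero (ringChar_ne_two_of_quadraticChar_neg_one hF)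
  have correction : (1 + quadraticChar F 2) *
      (boolSign (ε 0) - boolSign (ε 2) - boolSign (ε 0) * boolSign (ε 1) -
        boolSign (ε 1) * boolSign (ε 2)) ∈ ({-4, 0, 4} : Set ℤ) := by
    rcases quadraticChar_dichotomy h2 with hs | hs <;>
      rcases boolSign_eq_one_or_eq_neg_one (ε 0) with he₀ | he₀ <;>
      rcases boolSign_eq_one_or_eq_neg_one (ε 1) with he₁ | he₁ <;>
      rcases boolSign_eq_one_or_eq_neg_one (ε 2) with he₂ | he₂ <;>
      simp [hs, he₀, he₁, he₂]
  have count := eight_mul_card_patternSet hF ε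
  simp only [Set.mem_insert_iff, Set.mem_singleton_iff] at correction
  omega

end Pattern

theorem pattern_length_three_count (p : ℕ) [Fact p.Prime] (hp : p % 4 = 3)
    (ε : Fin 3 → Bool) :
    let N := (Finset.univ.filter (fun a : ZMod p =>
      ∀ i : Fin 3, a + (i : ℕ) ≠ 0 ∧ (IsSquare (a + (i : ℕ)) ↔ ε i = true))).card
    N = (p - 3) / 8 ∨ N = (p + 4) / 8 := by
  have h := card_patternSet_eq_or (F := ZMod p) (by rwa [ZMod.card]) ε
  rwa [ZMod.card] at h
end

section
/- If p is a prime with p ≡ 3 (mod 4), then for each nonzero d ∈ Z_p, the map a ↦ -a-2d gives a bijection between the set of 3-arithmetic progressions (a, a+d, a+2d) of nonzero quadratic residues with common difference d and the set of 3-arithmetic progressions of nonzero quadratic nonresidues with common difference d. -/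
/-!
Since `p ≡ 3 (mod 4)`, `-1` is a nonresidue, so negation swaps nonzero residues and nonresidues.
The map `a ↦ -a - 2d` is an involution sending the progression `(a, a + d, a + 2d)` to
`(-(a + 2d), -(a + d), -a)`, the negated progression read backwards.
-/

theorem FiniteField.isSquare_neg_iff_not_isSquare {F : Type*} [Field F] [Fintype F]
    (h : ¬IsSquare (-1 : F)) {x : F} (hx : x ≠ 0) : IsSquare (-x) ↔ ¬IsSquare x := by
  classical
  have hχ : quadraticChar F (-x) = -quadraticChar F x := by
    rw [neg_eq_neg_one_mul, map_mul, quadraticChar_neg_one_iff_not_isSquare.mpr h, neg_one_mul]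
  rw [← quadraticChar_one_iff_isSquare (neg_ne_zero.mpr hx), hχ, neg_eq_iff_eq_neg,
    quadraticChar_neg_one_iff_not_isSquare]

section ThreeAPs

variable {R : Type*} [Ring R]

def threeAPs (P : R → Prop) (d : R) : Set R :=
  {a | P a ∧ P (a + d) ∧ P (a + 2 * d)}

theorem mapsTo_threeAPs_neg_sub_two_mul {P Q : R → Prop} (hPQ : ∀ x, P x → Q (-x)) (d : R) :
    Set.MapsTo (fun a => -a - 2 * d) (threeAPs P d) (threeAPs Q d) := by
  rintro a ⟨h₀, h₁, h₂⟩
  have e₀ : -a - 2 * d = -(a + 2 * d) := by noncomm_ring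
  have e₁ : -a - 2 * d + d = -(a + d) := by noncomm_ring
  have e₂ : -a - 2 * d + 2 * d = -a := by noncomm_ring
  show Q (-a - 2 * d) ∧ Q (-a - 2 * d + d) ∧ Q (-a - 2 * d + 2 * d)
  rw [e₁, e₂, e₀]
  exact ⟨hPQ _ h₂, hPQ _ h₁, hPQ _ h₀⟩

theorem bijOn_threeAPs_neg_sub_two_mul {P Q : R → Prop} (hPQ : ∀ x, P x ↔ Q (-x)) (d : R) :
    Set.BijOn (fun a => -a - 2 * d) (threeAPs P d) (threeAPs Q d) := by
  have hinv : Function.Involutive (fun a : R => -a - 2 * d) := fun a => by noncomm_ring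
  refine Set.InvOn.bijOn ⟨fun a _ => hinv a, fun a _ => hinv a⟩
    (mapsTo_threeAPs_neg_sub_two_mul (fun x => (hPQ x).mp) d)
    (mapsTo_threeAPs_neg_sub_two_mul (fun x hx => ?_) d)
  rwa [hPQ, neg_neg]

end ThreeAPs

theorem three_ap_bijection_general (p : ℕ) [Fact p.Prime] (hp : p % 4 = 3)
    (d : ZMod p) :
    Set.BijOn (fun a : ZMod p => -a - 2 * d)
      {a : ZMod p | a ≠ 0 ∧ a + d ≠ 0 ∧ a + 2 * d ≠ 0 ∧
        IsSquare a ∧ IsSquare (a + d) ∧ IsSquare (a + 2 * d)}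
      {a : ZMod p | a ≠ 0 ∧ a + d ≠ 0 ∧ a + 2 * d ≠ 0 ∧
        ¬ IsSquare a ∧ ¬ IsSquare (a + d) ∧ ¬ IsSquare (a + 2 * d)} := by
  have hneg_one : ¬IsSquare (-1 : ZMod p) := by
    rw [FiniteField.isSquare_neg_one_iff, ZMod.card]
    exact not_not.mpr hp
  have hswap (x : ZMod p) : (x ≠ 0 ∧ IsSquare x) ↔ (-x ≠ 0 ∧ ¬IsSquare (-x)) := by
    by_cases hx : x = 0
    · simp [hx]
    · rw [FiniteField.isSquare_neg_iff_not_isSquare hneg_one hx, not_not, neg_ne_zero]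
  convert bijOn_threeAPs_neg_sub_two_mul (P := fun x => x ≠ 0 ∧ IsSquare x)
    (Q := fun x => x ≠ 0 ∧ ¬IsSquare x) hswap d using 1 <;>
    ext a <;> simp only [threeAPs, Set.mem_ofPred_eq] <;> tauto

theorem three_ap_bijection (p : ℕ) [Fact p.Prime] (hp : p % 4 = 3)
    (d : ZMod p) (hd : d ≠ 0) :
    Set.BijOn (fun a : ZMod p => -a - 2 * d)
      {a : ZMod p | a ≠ 0 ∧ a + d ≠ 0 ∧ a + 2 * d ≠ 0 ∧
        IsSquare a ∧ IsSquare (a + d) ∧ IsSquare (a + 2 * d)}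
      {a : ZMod p | a ≠ 0 ∧ a + d ≠ 0 ∧ a + 2 * d ≠ 0 ∧
        ¬ IsSquare a ∧ ¬ IsSquare (a + d) ∧ ¬ IsSquare (a + 2 * d)} :=
  three_ap_bijection_general p hp d
end
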